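/- Let M be a descriptive σ-model based on a weakly transitive frame, x a point of M, and Γ a set of σ-formulas. If M,x ⊨ ◇(⋀Γ') for every finite subset Γ' ⊆ Γ, then there exists a point y with xRy and M,y ⊨ χ for every χ ∈ Γ. -/

import Mathlib

/-- Modal formulas built from propositional variables (indexed by ℕ),
constants ⊤, ⊥, negation, conjunction and the modal operator ◇. -/
inductive MF : Type where
  | var : ℕ → MF
  | top : MF
  | bot : MF
  | neg : MF → MF
  | and : MF → MF → MF
  | dia : MF → MF
deriving DecidableEq

namespace MF

/-- Disjunction, as an abbreviation. -/
def or (a b : MF) : MF := neg (and (neg a) (neg b))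

/-- Implication, as an abbreviation. -/
def imp (a b : MF) : MF := MF.or (neg a) b

/-- Box, as an abbreviation: □φ := ¬◇¬φ. -/
def box (a : MF) : MF := neg (dia (neg a))

/-- The (finite) set of propositional variables occurring in a formula. -/
def sig : MF → Finset ℕ
  | var n => {n}
  | top => ∅
  | bot => ∅
  | neg a => a.sig
  | and a b => a.sig ∪ b.sig
  | dia a => a.sig

/-- The set of subformulas of a formula. -/
def subf : MF → Finset MF
  | var n => {var n}
  | top => {top}
  | bot => {bot}
  | neg a => insert (neg a) (subf a)
  | and a b => insert (and a b) (subf a ∪ subf b)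
  | dia a => insert (dia a) (subf a)

/-- The number of subformulas of a formula. -/
def nsub (a : MF) : ℕ := (subf a).card

end MF

/-- A Kripke model: a binary (accessibility) relation on worlds together with
a valuation assigning to each propositional variable a set of worlds. -/
structure KModel (W : Type) where
  R : W → W → Prop
  val : ℕ → W → Prop

/-- Weak transitivity: xRy and yRz imply x = z or xRz. -/
def WTrans {W : Type} (R : W → W → Prop) : Prop :=
  ∀ x y z : W, R x y → R y z → x = z ∨ R x z

/-- The usual Kripke truth relation. -/
def Sat {W : Type} (M : KModel W) : W → MF → Prop
  | x, .var n => M.val n x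
  | _, .top => True
  | _, .bot => False
  | x, .neg a => ¬ Sat M x a
  | x, .and a b => Sat M x a ∧ Sat M x b
  | x, .dia a => ∃ y, M.R x y ∧ Sat M y a

/-- wK4-validity: truth at every point of every model based on a weakly
transitive frame. -/
def WK4Valid (φ : MF) : Prop :=
  ∀ (W : Type) (M : KModel W), WTrans M.R → ∀ x : W, Sat M x φ

/-- The cluster of a point x: C(x) = {x} ∪ {y | xRy and yRx}. -/
def cluster {W : Type} (R : W → W → Prop) (x : W) : Set W :=
  {x} ∪ {y | R x y ∧ R y x}

/-- C R C' for sets of points: xRy for some x ∈ C, y ∈ C'. -/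
def clusterRel {W : Type} (R : W → W → Prop) (C C' : Set W) : Prop :=
  ∃ x ∈ C, ∃ y ∈ C', R x y

/-- C R y for a set C and point y: xRy for some x ∈ C. -/
def clusterRelPt {W : Type} (R : W → W → Prop) (C : Set W) (y : W) : Prop :=
  ∃ x ∈ C, R x y

/-- C R^s C': C R C' and C ≠ C'. -/
def clusterRelS {W : Type} (R : W → W → Prop) (C C' : Set W) : Prop :=
  clusterRel R C C' ∧ C ≠ C'

/-- A set is a cluster if it is the cluster of some point. -/
def IsCluster {W : Type} (R : W → W → Prop) (C : Set W) : Prop :=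
  ∃ x : W, C = cluster R x

/-- A σ-model is descriptive if it satisfies (dif), (ref) and (com). -/
def Descriptive {W : Type} (σ : Finset ℕ) (M : KModel W) : Prop :=
  (∀ x y : W, (∀ φ : MF, φ.sig ⊆ σ → (Sat M x φ ↔ Sat M y φ)) → x = y) ∧
  (∀ x y : W, M.R x y ↔ ∀ χ : MF, χ.sig ⊆ σ → Sat M y χ → Sat M x (MF.dia χ)) ∧
  (∀ Γ : Set MF, (∀ φ ∈ Γ, φ.sig ⊆ σ) →
    (∀ Γ' : Finset MF, ↑Γ' ⊆ Γ → ∃ x : W, ∀ φ ∈ Γ', Sat M x φ) →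
    ∃ x : W, ∀ φ ∈ Γ, Sat M x φ)

/-- The ρ-type of a point: the set of all ρ-formulas true at it. -/
def rType {W : Type} (M : KModel W) (ρ : Finset ℕ) (x : W) : Set MF :=
  {φ : MF | φ.sig ⊆ ρ ∧ Sat M x φ}

/-- A cluster C is ρ-maximal if whenever C R y and some x ∈ C has the same
ρ-type as y, then y ∈ C. -/
def RhoMaximal {W : Type} (M : KModel W) (ρ : Finset ℕ) (C : Set W) : Prop :=
  ∀ x ∈ C, ∀ y : W, clusterRelPt M.R C y → rType M ρ x = rType M ρ y → y ∈ C

/-- β is a ρ-bisimulation between M1 and M2: conditions (atom) and (move). -/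
def IsBisim {W1 W2 : Type} (ρ : Finset ℕ) (M1 : KModel W1) (M2 : KModel W2)
    (β : W1 → W2 → Prop) : Prop :=
  ∀ x1 x2, β x1 x2 →
    (∀ n ∈ ρ, M1.val n x1 ↔ M2.val n x2) ∧
    (∀ y1, M1.R x1 y1 → ∃ y2, M2.R x2 y2 ∧ β y1 y2) ∧
    (∀ y2, M2.R x2 y2 → ∃ y1, M1.R x1 y1 ∧ β y1 y2)

/-- M1,x1 ∼ρ M2,x2 : some ρ-bisimulation relates x1 to x2. -/
def Bisimilar {W1 W2 : Type} (ρ : Finset ℕ) (M1 : KModel W1) (x1 : W1)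
    (M2 : KModel W2) (x2 : W2) : Prop :=
  ∃ β : W1 → W2 → Prop, IsBisim ρ M1 M2 β ∧ β x1 x2

/-- Conjunction of a list of formulas (⋀∅ = ⊤). -/
def conjList : List MF → MF
  | [] => MF.top
  | a :: l => MF.and a (conjList l)

/-!
By (com) there is a point satisfying `Γ` together with every σ-formula that is boxed at `x`:
a finite part of this set is satisfied by the successor of `x` witnessing `◇⋀Γ'`, where `Γ'`
is its part inside `Γ`. By (ref), a point satisfying all σ-formulas boxed at `x` is a
successor of `x`.
-/

section

variable {W : Type} {M : KModel W}

lemma sat_conjList {z : W} {l : List MF} : Sat M z (conjList l) ↔ ∀ φ ∈ l, Sat M z φ := by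
  induction l with
  | nil => simp [conjList, Sat]
  | cons a l ih => simp [conjList, Sat, ih]

lemma sat_box {x : W} {φ : MF} : Sat M x φ.box ↔ ∀ y, M.R x y → Sat M y φ := by
  simp [MF.box, Sat]

def boxTheory (M : KModel W) (σ : Finset ℕ) (x : W) : Set MF :=
  {φ | φ.sig ⊆ σ ∧ Sat M x φ.box}

lemma sat_of_mem_boxTheory {σ : Finset ℕ} {x y : W} {φ : MF} (hxy : M.R x y)
    (hφ : φ ∈ boxTheory M σ x) : Sat M y φ :=
  sat_box.1 hφ.2 y hxy

lemma Descriptive.rel_of_forall_boxTheory {σ : Finset ℕ} (hd : Descriptive σ M) {x y : W}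
    (hy : ∀ φ ∈ boxTheory M σ x, Sat M y φ) : M.R x y := by
  refine (hd.2.1 x y).2 fun χ hχσ hχ => ?_
  by_contra hx
  have hbox : MF.neg χ ∈ boxTheory M σ x :=
    ⟨hχσ, sat_box.2 fun z hxz hz => hx ⟨z, hxz, hz⟩⟩
  exact hy _ hbox hχ

lemma finitelySat_union_boxTheory {σ : Finset ℕ} {x : W} {Γ : Set MF}
    (h : ∀ Γ' : Finset MF, ↑Γ' ⊆ Γ → Sat M x (MF.dia (conjList Γ'.toList)))
    (Δ : Finset MF) (hΔ : ↑Δ ⊆ Γ ∪ boxTheory M σ x) : ∃ z : W, ∀ φ ∈ Δ, Sat M z φ := by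
  classical
  obtain ⟨z, hxz, hz⟩ := h (Δ.filter (· ∈ Γ)) (by intro φ hφ; simp_all)
  refine ⟨z, fun φ hφ => ?_⟩
  by_cases hφΓ : φ ∈ Γ
  · exact sat_conjList.1 hz φ (by simp [hφ, hφΓ])
  · exact sat_of_mem_boxTheory hxz ((hΔ hφ).resolve_left hφΓ)

end

theorem stmt10_general {W : Type} (σ : Finset ℕ) (M : KModel W)
    (hd : Descriptive σ M) (x : W)
    (Γ : Set MF) (hΓ : ∀ φ ∈ Γ, φ.sig ⊆ σ)
    (h : ∀ Γ' : Finset MF, ↑Γ' ⊆ Γ → Sat M x (MF.dia (conjList Γ'.toList))) :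
    ∃ y : W, M.R x y ∧ ∀ χ ∈ Γ, Sat M y χ := by
  have hsig : ∀ φ ∈ Γ ∪ boxTheory M σ x, φ.sig ⊆ σ := by
    rintro φ (hφ | hφ)
    exacts [hΓ φ hφ, hφ.1]
  obtain ⟨y, hy⟩ := hd.2.2 _ hsig (finitelySat_union_boxTheory h)
  exact ⟨y, hd.rel_of_forall_boxTheory fun φ hφ => hy φ (Or.inr hφ),
    fun χ hχ => hy χ (Or.inl hχ)⟩

/-- If M,x ⊨ ◇(⋀Γ') for every finite subset Γ' of a set Γ of σ-formulas in a
descriptive σ-model M on a weakly transitive frame, then some R-successor of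
x satisfies all of Γ. -/
theorem stmt10 {W : Type} (σ : Finset ℕ) (M : KModel W)
    (hw : WTrans M.R) (hd : Descriptive σ M) (x : W)
    (Γ : Set MF) (hΓ : ∀ φ ∈ Γ, φ.sig ⊆ σ)
    (h : ∀ Γ' : Finset MF, ↑Γ' ⊆ Γ → Sat M x (MF.dia (conjList Γ'.toList))) :
    ∃ y : W, M.R x y ∧ ∀ χ ∈ Γ, Sat M y χ :=
  stmt10_general σ M hd x Γ hΓ h
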